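/- arXiv:1403.1401 — 2 statements merged into one kernel-verified Lean document; each statement's English description precedes it below -/
import Mathlib

section
/- Let μ > 0 and f ∈ H^1(ℝ) ∩ L^∞(ℝ). Then the function g(x) = |f(x)|^{2μ} f(x) belongs to H^1(ℝ), and ‖g‖_{H^1} ≤ c ‖f‖_{H^1}^{2μ+1} for a constant c depending only on μ. -/
open MeasureTheory

noncomputable def L2norm (f : ℝ → ℂ) : ℝ := (eLpNorm f 2 volume).toReal

noncomputable def H1norm (f g : ℝ → ℂ) : ℝ := Real.sqrt (L2norm f ^ 2 + L2norm g ^ 2)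

/-- `f` is (the continuous representative of) an `H¹(ℝ)` function with weak
derivative `g`: both are in `L²` and `f` is the integral of `g`. -/
def IsH1 (f g : ℝ → ℂ) : Prop :=
  MemLp f 2 volume ∧ MemLp g 2 volume ∧ ∀ x y : ℝ, f y - f x = ∫ t in x..y, g t

/-- The free Schrödinger kernel `U(t,x) = (4πit)^{-1/2} e^{ix²/(4t)}`. -/
noncomputable def freeK (t x : ℝ) : ℂ :=
  (4 * Real.pi * Complex.I * t) ^ (-(1/2 : ℂ)) * Complex.exp (Complex.I * x ^ 2 / (4 * t))

/-! For `p = 2μ > 0` the map `N z = ‖z‖ ^ p • z` is `C¹` on any real inner product space, with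
`‖DN z‖ ≤ (p + 1) ‖z‖ ^ p`. An `H¹(ℝ)` function `f` is absolutely continuous, and averaging it over
a unit interval bounds it pointwise by `‖f‖₂ + ‖f'‖₂ ≤ 2 ‖f‖_{H¹}`. The chain rule for absolutely
continuous functions then gives `(N ∘ f)' = DN(f) f'`, and the pointwise bounds
`|N(f)| ≤ ‖f‖_∞ ^ p |f|` and `|DN(f) f'| ≤ (p + 1) ‖f‖_∞ ^ p |f'|` give the `H¹` estimate. -/

open Set Filter Topology

theorem IntervalIntegrable.continuousOn_clm_apply {E F : Type*} [NormedAddCommGroup E]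
    [NormedSpace ℝ E] [NormedAddCommGroup F] [NormedSpace ℝ F]
    {L : ℝ → E →L[ℝ] F} {g : ℝ → E} {a b : ℝ}
    (hL : ContinuousOn L (uIcc a b)) (hg : IntervalIntegrable g volume a b) :
    IntervalIntegrable (fun t => L t (g t)) volume a b := by
  obtain ⟨C, hC⟩ := isCompact_uIcc.exists_bound_of_continuousOn hL
  rw [intervalIntegrable_iff] at hg ⊢
  refine hg.norm.const_mul C |>.mono' ?_ ?_
  · exact (ContinuousLinearMap.id ℝ _).aestronglyMeasurable_comp₂
      ((hL.mono uIoc_subset_uIcc).aestronglyMeasurable measurableSet_uIoc) hg.1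
  · refine (ae_restrict_iff' measurableSet_uIoc).2 (Eventually.of_forall fun t ht => ?_)
    exact (L t).le_of_opNorm_le (hC t (uIoc_subset_uIcc ht)) (g t)

namespace AbsolutelyContinuousOnInterval

variable {a b : ℝ}

theorem congr {X : Type*} [PseudoMetricSpace X] {f g : ℝ → X}
    (hf : AbsolutelyContinuousOnInterval f a b) (hfg : EqOn f g (uIcc a b)) :
    AbsolutelyContinuousOnInterval g a b := by
  refine Tendsto.congr' (eventually_inf_principal.2 (Eventually.of_forall fun E hE => ?_)) hf
  simp only [disjWithin, mem_ofPred_eq] at hE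
  exact Finset.sum_congr rfl fun i hi =>
    by rw [hfg (hE.1 i hi).1, hfg (hE.1 i hi).2]

theorem comp_lipschitzOnWith {X Y : Type*} [PseudoMetricSpace X] [PseudoMetricSpace Y]
    {f : ℝ → X} {g : X → Y} {K : NNReal} {s : Set X}
    (hf : AbsolutelyContinuousOnInterval f a b) (hg : LipschitzOnWith K g s)
    (hfs : MapsTo f (uIcc a b) s) :
    AbsolutelyContinuousOnInterval (g ∘ f) a b := by
  unfold AbsolutelyContinuousOnInterval at hf ⊢
  refine squeeze_zero' (Eventually.of_forall fun _ => Finset.sum_nonneg fun _ _ => dist_nonneg)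
    (eventually_inf_principal.2 (Eventually.of_forall fun E hE => ?_))
    (by simpa using hf.const_mul (K : ℝ))
  simp only [disjWithin, mem_ofPred_eq] at hE
  rw [Finset.mul_sum]
  exact Finset.sum_le_sum fun i hi =>
    hg.dist_le_mul _ (hfs (hE.1 i hi).1) _ (hfs (hE.1 i hi).2)

theorem of_re_im {f : ℝ → ℂ} (hre : AbsolutelyContinuousOnInterval (fun t => (f t).re) a b)
    (him : AbsolutelyContinuousOnInterval (fun t => (f t).im) a b) :
    AbsolutelyContinuousOnInterval f a b := by
  unfold AbsolutelyContinuousOnInterval at hre him ⊢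
  refine squeeze_zero (fun _ => Finset.sum_nonneg fun _ _ => dist_nonneg) (fun E => ?_)
    (by simpa using hre.add him)
  rw [← Finset.sum_add_distrib]
  refine Finset.sum_le_sum fun i _ => ?_
  simpa [Real.dist_eq, Complex.dist_eq, ← Complex.sub_re, ← Complex.sub_im] using
    Complex.norm_le_abs_re_add_abs_im (f (E.2 i).1 - f (E.2 i).2)

end AbsolutelyContinuousOnInterval

theorem IntervalIntegrable.absolutelyContinuousOnInterval_intervalIntegral_complex
    {h : ℝ → ℂ} {a b c : ℝ} (hh : IntervalIntegrable h volume a b) (hc : c ∈ uIcc a b) :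
    AbsolutelyContinuousOnInterval (fun x => ∫ v in c..x, h v) a b := by
  have hcx : ∀ x ∈ uIcc a b, IntervalIntegrable h volume c x := fun x hx =>
    hh.mono_set (uIcc_subset_uIcc hc hx)
  refine .of_re_im ?_ ?_
  · exact (IntervalIntegrable.absolutelyContinuousOnInterval_intervalIntegral
      ⟨hh.1.re, hh.2.re⟩ hc).congr fun x hx => by
        simpa using intervalIntegral.intervalIntegral_re (hcx x hx)
  · exact (IntervalIntegrable.absolutelyContinuousOnInterval_intervalIntegral
      ⟨hh.1.im, hh.2.im⟩ hc).congr fun x hx => by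
        simpa using intervalIntegral.intervalIntegral_im (hcx x hx)

theorem integral_eq_sub_of_hasFDerivAt_comp {Φ : ℂ → ℂ} {DΦ : ℂ → ℂ →L[ℝ] ℂ}
    (hΦ : ∀ z, HasFDerivAt Φ (DΦ z) z) (hDΦ : Continuous DΦ) {f f' : ℝ → ℂ}
    (hf' : LocallyIntegrable f' volume) (hf : ∀ x y, f y - f x = ∫ t in x..y, f' t)
    (x y : ℝ) :
    ∫ t in x..y, DΦ (f t) (f' t) = Φ (f y) - Φ (f x) := by
  have hf_eq : f = fun t => f x + ∫ s in x..t, f' s :=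
    funext fun t => eq_add_of_sub_eq' (hf x t)
  have hf'_int : IntervalIntegrable f' volume x y := by
    rw [intervalIntegrable_iff]
    exact (hf'.integrableOn_isCompact isCompact_uIcc).mono_set uIoc_subset_uIcc
  have hf_ac : AbsolutelyContinuousOnInterval f x y := by
    rw [hf_eq]
    exact (hf'_int.absolutelyContinuousOnInterval_intervalIntegral_complex left_mem_uIcc)
      |>.comp_lipschitzOnWith (IsometryEquiv.addLeft (f x)).isometry.lipschitz.lipschitzOnWith
        (mapsTo_univ _ _)
  obtain ⟨K, hK⟩ : ∃ K, LipschitzOnWith K Φ (f '' uIcc x y) :=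
    (contDiff_one_iff_hasFDerivAt.2 ⟨DΦ, hDΦ, hΦ⟩).locallyLipschitz.locallyLipschitzOn
      |>.exists_lipschitzOnWith_of_compact
        (isCompact_uIcc.image_of_continuousOn hf_ac.continuousOn)
  have hint : IntervalIntegrable (fun t => DΦ (f t) (f' t)) volume x y :=
    hf'_int.continuousOn_clm_apply (hDΦ.comp_continuousOn hf_ac.continuousOn)
  -- `Φ ∘ f - ∫ DΦ(f) f'` is absolutely continuous with zero derivative a.e., hence constant.
  have hG_ac : AbsolutelyContinuousOnInterval
      (fun t => Φ (f t) - ∫ s in x..t, DΦ (f s) (f' s)) x y :=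
    (hf_ac.comp_lipschitzOnWith hK (mapsTo_image _ _)).sub
      (hint.absolutelyContinuousOnInterval_intervalIntegral_complex left_mem_uIcc)
  have hG_deriv : ∀ᵐ t, t ∈ uIcc x y →
      HasDerivAt (fun t => Φ (f t) - ∫ s in x..t, DΦ (f s) (f' s)) 0 t := by
    filter_upwards [LocallyIntegrable.ae_hasDerivAt_integral hf', hint.ae_hasDerivAt_integral]
      with t hft hPt ht
    have hf_t : HasDerivAt f (f' t) t := by
      rw [hf_eq]
      exact (hft x).const_add _
    exact (((hΦ (f t)).comp_hasDerivAt t hf_t).sub (hPt ht x left_mem_uIcc)).congr_deriv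
      (sub_self _)
  obtain ⟨C, hC⟩ := hG_ac.const_of_ae_hasDerivAt_zero hG_deriv
  have hGx := hC x left_mem_uIcc
  have hGy := hC y right_mem_uIcc
  simp only [intervalIntegral.integral_same, sub_zero] at hGx hGy
  linear_combination hGx - hGy

section NormRpowSmul

variable {E : Type*} [NormedAddCommGroup E] [InnerProductSpace ℝ E] {p : ℝ}

noncomputable def normRpowSmul (p : ℝ) (z : E) : E := ‖z‖ ^ p • z

noncomputable def normRpowSmulDeriv (p : ℝ) (z : E) : E →L[ℝ] E :=
  ‖z‖ ^ p • ContinuousLinearMap.id ℝ E + ((p * ‖z‖ ^ (p - 2)) • innerSL ℝ z).smulRight z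

theorem norm_normRpowSmul (z : E) : ‖normRpowSmul p z‖ = ‖z‖ ^ p * ‖z‖ := by
  rw [normRpowSmul, norm_smul, Real.norm_of_nonneg (by positivity)]

theorem normRpowSmulDeriv_zero (hp : 0 < p) : normRpowSmulDeriv p (0 : E) = 0 := by
  simp [normRpowSmulDeriv, Real.zero_rpow hp.ne']

theorem norm_normRpowSmulDeriv_le (hp : 0 < p) (z : E) :
    ‖normRpowSmulDeriv p z‖ ≤ (p + 1) * ‖z‖ ^ p := by
  have hsq : ‖z‖ ^ (p - 2) * ‖z‖ ^ 2 = ‖z‖ ^ p := by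
    rw [← Real.rpow_two, ← Real.rpow_add' (norm_nonneg z) (by simpa using hp.ne'), sub_add_cancel]
  calc ‖normRpowSmulDeriv p z‖
      ≤ ‖z‖ ^ p * ‖ContinuousLinearMap.id ℝ E‖ + p * ‖z‖ ^ (p - 2) * ‖z‖ * ‖z‖ := by
        refine (norm_add_le _ _).trans (add_le_add ?_ ?_)
        · rw [norm_smul, Real.norm_of_nonneg (by positivity)]
        · rw [ContinuousLinearMap.norm_smulRight_apply, norm_smul, innerSL_apply_norm,
            Real.norm_of_nonneg (by positivity)]
    _ ≤ ‖z‖ ^ p * 1 + p * (‖z‖ ^ (p - 2) * ‖z‖ ^ 2) := by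
        rw [sq, ← mul_assoc, ← mul_assoc]
        gcongr
        exact ContinuousLinearMap.norm_id_le
    _ = (p + 1) * ‖z‖ ^ p := by rw [hsq]; ring

theorem hasFDerivAt_normRpowSmul (hp : 0 < p) (z : E) :
    HasFDerivAt (normRpowSmul p) (normRpowSmulDeriv p z) z := by
  rcases eq_or_ne z 0 with rfl | hz
  · rw [normRpowSmulDeriv_zero hp, hasFDerivAt_iff_isLittleO_nhds_zero]
    have hsmall : (fun h : E => ‖h‖ ^ p) =o[𝓝 0] (fun _ => (1 : ℝ)) := by
      refine (Asymptotics.isLittleO_one_iff ℝ).2 ?_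
      simpa [Real.zero_rpow hp.ne'] using
        ((continuous_norm.rpow_const fun _ => Or.inr hp.le).tendsto (0 : E))
    simpa [normRpowSmul] using hsmall.smul_isBigO (Asymptotics.isBigO_refl (fun h : E => h) _)
  · have hnorm : HasFDerivAt (fun w : E => ‖w‖ ^ p) ((p * ‖z‖ ^ (p - 2)) • innerSL ℝ z) z := by
      convert ((hasStrictFDerivAt_norm_sq z).rpow_const (p := p / 2) (by simp [hz])).hasFDerivAt
        using 1
      · ext w
        rw [← Real.rpow_natCast_mul (norm_nonneg w)]
        norm_num
        ring_nf
      · rw [← Real.rpow_natCast_mul (norm_nonneg z), ← Nat.cast_smul_eq_nsmul ℝ, smul_smul]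
        ring_nf
    exact hnorm.smul (hasFDerivAt_id z)

theorem continuous_normRpowSmulDeriv (hp : 0 < p) :
    Continuous (normRpowSmulDeriv (E := E) p) := by
  refine continuous_iff_continuousAt.2 fun z => ?_
  rcases eq_or_ne z 0 with rfl | hz
  · rw [ContinuousAt, normRpowSmulDeriv_zero hp]
    refine squeeze_zero_norm (norm_normRpowSmulDeriv_le hp) ?_
    have hcont : Continuous fun w : E => (p + 1) * ‖w‖ ^ p := by
      fun_prop (disch := exact hp.le)
    simpa [Real.zero_rpow hp.ne'] using hcont.tendsto 0
  · have hz' : ‖z‖ ≠ 0 ∨ 0 ≤ p - 2 := Or.inl (norm_ne_zero_iff.2 hz)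
    have hcoef : ContinuousAt (fun w : E => (p * ‖w‖ ^ (p - 2)) • innerSL ℝ w) z := by
      fun_prop (disch := exact hz')
    have hsmulRight :
        ContinuousAt (fun w : E => ((p * ‖w‖ ^ (p - 2)) • innerSL ℝ w).smulRight w) z :=
      (ContinuousLinearMap.smulRightL ℝ E E).continuous₂.continuousAt.comp
        (hcoef.prodMk continuousAt_id)
    exact ContinuousAt.add (by fun_prop (disch := exact Or.inr hp.le)) hsmulRight

theorem norm_normRpowSmul_le {S : ℝ} (hp : 0 ≤ p) {z : E} (hz : ‖z‖ ≤ S) :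
    ‖normRpowSmul p z‖ ≤ S ^ p * ‖z‖ := by
  rw [norm_normRpowSmul]
  gcongr

theorem norm_normRpowSmulDeriv_apply_le {S : ℝ} (hp : 0 < p) {z : E} (hz : ‖z‖ ≤ S) (w : E) :
    ‖normRpowSmulDeriv p z w‖ ≤ (p + 1) * S ^ p * ‖w‖ := by
  refine (normRpowSmulDeriv p z).le_of_opNorm_le ((norm_normRpowSmulDeriv_le hp z).trans ?_) w
  gcongr

end NormRpowSmul

theorem L2norm_nonneg (u : ℝ → ℂ) : 0 ≤ L2norm u := ENNReal.toReal_nonneg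

theorem H1norm_nonneg (u v : ℝ → ℂ) : 0 ≤ H1norm u v := Real.sqrt_nonneg _

theorem L2norm_le_H1norm_left (u v : ℝ → ℂ) : L2norm u ≤ H1norm u v :=
  Real.le_sqrt_of_sq_le (le_add_of_nonneg_right (sq_nonneg _))

theorem L2norm_le_H1norm_right (u v : ℝ → ℂ) : L2norm v ≤ H1norm u v :=
  Real.le_sqrt_of_sq_le (le_add_of_nonneg_left (sq_nonneg _))

theorem L2norm_le_mul {u v : ℝ → ℂ} {c : ℝ} (hv : MemLp v 2 volume) (hc : 0 ≤ c)
    (h : ∀ t, ‖u t‖ ≤ c * ‖v t‖) : L2norm u ≤ c * L2norm v := by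
  have := eLpNorm_le_mul_eLpNorm_of_ae_le_mul (μ := volume) (Eventually.of_forall h) 2
  unfold L2norm
  rw [← ENNReal.toReal_ofReal hc, ← ENNReal.toReal_mul]
  exact ENNReal.toReal_mono (ENNReal.mul_ne_top ENNReal.ofReal_ne_top hv.eLpNorm_ne_top) this

theorem H1norm_le_mul {u v f g : ℝ → ℂ} {c : ℝ} (hc : 0 ≤ c) (hu : L2norm u ≤ c * L2norm f)
    (hv : L2norm v ≤ c * L2norm g) : H1norm u v ≤ c * H1norm f g := by
  rw [H1norm, H1norm, ← Real.sqrt_sq hc, ← Real.sqrt_mul (sq_nonneg c)]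
  refine Real.sqrt_le_sqrt ?_
  have hu' := pow_le_pow_left₀ (L2norm_nonneg u) hu 2
  have hv' := pow_le_pow_left₀ (L2norm_nonneg v) hv 2
  nlinarith

theorem setIntegral_norm_le_L2norm {u : ℝ → ℂ} (hu : MemLp u 2 volume) {s : Set ℝ}
    (hs : volume s = 1) : ∫ t in s, ‖u t‖ ≤ L2norm u := by
  have : IsProbabilityMeasure (volume.restrict s) := ⟨by simp [hs]⟩
  rw [integral_norm_eq_lintegral_enorm hu.1.restrict, ← eLpNorm_one_eq_lintegral_enorm]
  calc (eLpNorm u 1 (volume.restrict s)).toReal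
      ≤ (eLpNorm u 2 (volume.restrict s)).toReal :=
        ENNReal.toReal_mono (hu.restrict s).eLpNorm_ne_top
          (eLpNorm_le_eLpNorm_of_exponent_le one_le_two hu.1.restrict)
    _ ≤ L2norm u := ENNReal.toReal_mono hu.eLpNorm_ne_top
          (eLpNorm_mono_measure _ Measure.restrict_le_self)

namespace IsH1

variable {f f' : ℝ → ℂ} {p : ℝ}

theorem norm_le (hf : IsH1 f f') (t : ℝ) : ‖f t‖ ≤ L2norm f + L2norm f' := by
  have hvol : volume (Icc (t - 1) t) = 1 := by simp
  have hint : ∀ u : ℝ → ℂ, MemLp u 2 volume → IntegrableOn u (Icc (t - 1) t) := fun u hu =>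
    (hu.restrict _).integrable one_le_two
  obtain ⟨y, hy, hfy⟩ := exists_le_setAverage (by simp [hvol]) (by simp [hvol])
    (hint f hf.1).norm
  rw [setAverage_eq, measureReal_def, hvol] at hfy
  simp only [ENNReal.toReal_one, inv_one, one_smul] at hfy
  have hf'y : ‖∫ s in y..t, f' s‖ ≤ ∫ s in Icc (t - 1) t, ‖f' s‖ := by
    rw [intervalIntegral.integral_of_le hy.2]
    refine (norm_integral_le_integral_norm _).trans (setIntegral_mono_set (hint f' hf.2.1).norm
      (Eventually.of_forall fun _ => norm_nonneg _) (Eventually.of_forall ?_))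
    exact Ioc_subset_Icc_self.trans (Icc_subset_Icc_left hy.1)
  calc ‖f t‖ = ‖f y + ∫ s in y..t, f' s‖ := by rw [← hf.2.2 y t, add_sub_cancel]
    _ ≤ ‖f y‖ + ‖∫ s in y..t, f' s‖ := norm_add_le _ _
    _ ≤ L2norm f + L2norm f' := add_le_add
        (hfy.trans (setIntegral_norm_le_L2norm hf.1 hvol))
        (hf'y.trans (setIntegral_norm_le_L2norm hf.2.1 hvol))

theorem comp_normRpowSmul (hf : IsH1 f f') (hp : 0 < p) :
    IsH1 (fun t => normRpowSmul p (f t)) (fun t => normRpowSmulDeriv p (f t) (f' t)) := by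
  refine ⟨hf.1.of_le_mul ?_ (Eventually.of_forall fun t => norm_normRpowSmul_le hp.le
      (hf.norm_le t)), hf.2.1.of_le_mul ?_ (Eventually.of_forall fun t =>
      norm_normRpowSmulDeriv_apply_le hp (hf.norm_le t) (f' t)), fun x y => ?_⟩
  · exact (continuous_iff_continuousAt.2 fun z =>
      (hasFDerivAt_normRpowSmul hp z).continuousAt).comp_aestronglyMeasurable hf.1.1
  · exact (ContinuousLinearMap.id ℝ _).aestronglyMeasurable_comp₂
      ((continuous_normRpowSmulDeriv hp).comp_aestronglyMeasurable hf.1.1) hf.2.1.1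
  · exact (integral_eq_sub_of_hasFDerivAt_comp (hasFDerivAt_normRpowSmul hp)
      (continuous_normRpowSmulDeriv hp) (hf.2.1.locallyIntegrable one_le_two) hf.2.2 x y).symm

theorem H1norm_comp_normRpowSmul_le (hf : IsH1 f f') (hp : 0 < p) :
    H1norm (fun t => normRpowSmul p (f t)) (fun t => normRpowSmulDeriv p (f t) (f' t)) ≤
      (p + 1) * (2 * H1norm f f') ^ p * H1norm f f' := by
  have hS : ∀ t, ‖f t‖ ≤ 2 * H1norm f f' := fun t => (hf.norm_le t).trans (by
    linarith [L2norm_le_H1norm_left f f', L2norm_le_H1norm_right f f'])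
  have hSp : 0 ≤ (2 * H1norm f f') ^ p :=
    Real.rpow_nonneg (mul_nonneg zero_le_two (H1norm_nonneg f f')) p
  have hC : 0 ≤ (p + 1) * (2 * H1norm f f') ^ p := mul_nonneg (by linarith) hSp
  refine H1norm_le_mul hC (L2norm_le_mul hf.1 hC fun t => ?_)
    (L2norm_le_mul hf.2.1 hC fun t => norm_normRpowSmulDeriv_apply_le hp (hS t) _)
  refine (norm_normRpowSmul_le hp.le (hS t)).trans ?_
  gcongr
  exact le_mul_of_one_le_left hSp (by linarith)

end IsH1

/-- For μ > 0 and f ∈ H¹(ℝ) ∩ L^∞(ℝ), the function g(x) = |f(x)|^{2μ} f(x) is in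
H¹(ℝ) with ‖g‖_{H¹} ≤ c ‖f‖_{H¹}^{2μ+1}, c depending only on μ. -/
theorem power_nonlinearity_H1 (μ : ℝ) (hμ : 0 < μ) :
    ∃ c : ℝ, 0 < c ∧ ∀ f f' : ℝ → ℂ, IsH1 f f' → (∃ M : ℝ, ∀ x, ‖f x‖ ≤ M) →
      ∃ g' : ℝ → ℂ,
        IsH1 (fun x => (Complex.ofReal (‖f x‖ ^ (2 * μ))) * f x) g' ∧
        H1norm (fun x => (Complex.ofReal (‖f x‖ ^ (2 * μ))) * f x) g'
          ≤ c * H1norm f f' ^ (2 * μ + 1) := by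
  have hp : 0 < 2 * μ := by positivity
  refine ⟨(2 * μ + 1) * 2 ^ (2 * μ), by positivity, fun f f' hf _ => ?_⟩
  have hN : (fun x => (Complex.ofReal (‖f x‖ ^ (2 * μ))) * f x) =
      fun x => normRpowSmul (2 * μ) (f x) := by
    funext x
    rw [normRpowSmul, Complex.real_smul]
  rw [hN]
  refine ⟨_, hf.comp_normRpowSmul hp, (hf.H1norm_comp_normRpowSmul_le hp).trans_eq ?_⟩
  have hH := H1norm_nonneg f f'
  rw [Real.mul_rpow zero_le_two hH, Real.rpow_add' hH (by positivity), Real.rpow_one]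
  ring
end

section
/- (Convergence of regularized energies) Let V ∈ L^1(ℝ,(1+|x|)dx) ∩ L^∞(ℝ), μ > 0, α = ∫V dx, and ψ₀ ∈ H^1(ℝ). Define E^ε(ψ₀) = ∫|ψ₀'|²dx + (μ+1)^{-1}∫ε^{-1}V(x/ε)|ψ₀(x)|^{2μ+2}dx and E(ψ₀) = ∫|ψ₀'|²dx + α(μ+1)^{-1}|ψ₀(0)|^{2μ+2}. Then E^ε(ψ₀) → E(ψ₀) as ε → 0, with rate |E^ε(ψ₀) − E(ψ₀)| ≤ c√ε. -/
/-!
After the substitution `x = ε y` the potential term becomes `∫ V(y) |ψ₀(εy)|^{2μ+2} dy`, whose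
distance to `α |ψ₀(0)|^{2μ+2}` is `∫ V(y) (|ψ₀(εy)|^{2μ+2} - |ψ₀(0)|^{2μ+2}) dy`. By Cauchy–Schwarz
an `H¹(ℝ)` function is bounded and `1/2`-Hölder, `|ψ₀(z) - ψ₀(0)| ≤ √|z| ‖ψ₀'‖₂`, and `t ↦ t^{2μ+2}`
is Lipschitz on bounded sets; so the integrand is `O(√ε (1 + |y|) |V(y)|)`, integrable by the
moment condition on `V`.
-/

open MeasureTheory

open Set Filter Topology

lemma abs_rpow_sub_rpow_le {p M a b : ℝ} (hp : 1 ≤ p) (ha : 0 ≤ a) (haM : a ≤ M)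
    (hb : 0 ≤ b) (hbM : b ≤ M) :
    |a ^ p - b ^ p| ≤ p * M ^ (p - 1) * |a - b| := by
  wlog hba : b ≤ a generalizing a b
  · rw [abs_sub_comm, abs_sub_comm a b]; exact this hb hbM ha haM (le_of_not_ge hba)
  have hderiv_le : ∀ x ∈ Ico b a, ‖p * x ^ (p - 1)‖ ≤ p * M ^ (p - 1) := fun x hx => by
    have hx0 : 0 ≤ x := hb.trans hx.1
    rw [Real.norm_of_nonneg (by positivity)]
    gcongr
    exact hx.2.le.trans haM
  have mvt := norm_image_sub_le_of_norm_deriv_le_segment' (f := fun x : ℝ => x ^ p)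
    (fun x _ => (Real.hasDerivAt_rpow_const (Or.inr hp)).hasDerivWithinAt) hderiv_le a
    (right_mem_Icc.2 hba)
  simpa only [Real.norm_eq_abs, abs_of_nonneg (sub_nonneg.2 hba)] using mvt

lemma intervalIntegral_norm_le_sqrt_mul {E : Type*} [NormedAddCommGroup E] {h : ℝ → E}
    (hh : MemLp h 2) {x y : ℝ} (hxy : x ≤ y) :
    ∫ t in x..y, ‖h t‖ ≤ √((y - x) * ∫ t, ‖h t‖ ^ 2) := by
  have holder := integral_mul_le_Lp_mul_Lq_of_nonneg (μ := volume.restrict (Ioc x y))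
    Real.HolderConjugate.two_two (f := fun _ => (1 : ℝ)) (g := fun t => ‖h t‖)
    (.of_forall fun _ => zero_le_one) (.of_forall fun _ => norm_nonneg _)
    (memLp_const 1) (by simpa using hh.norm.restrict (Ioc x y))
  have restrict_le : ∫ t in Ioc x y, ‖h t‖ ^ 2 ≤ ∫ t, ‖h t‖ ^ 2 :=
    setIntegral_le_integral (hh.integrable_norm_pow two_ne_zero) (.of_forall fun _ => by positivity)
  simp only [one_mul, one_pow, mul_one, integral_const, smul_eq_mul, Real.rpow_two,
    measureReal_restrict_apply_univ, Real.volume_real_Ioc_of_le hxy] at holder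
  rw [intervalIntegral.integral_of_le hxy, Real.sqrt_mul (sub_nonneg.2 hxy), Real.sqrt_eq_rpow,
    Real.sqrt_eq_rpow]
  refine holder.trans (mul_le_mul_of_nonneg_left ?_ (Real.rpow_nonneg (sub_nonneg.2 hxy) _))
  exact Real.rpow_le_rpow (integral_nonneg fun _ => by positivity) restrict_le (by norm_num)

lemma integral_inv_mul_comp_div_mul {V g : ℝ → ℝ} {ε : ℝ} (hε : 0 < ε) :
    ∫ x, ε⁻¹ * V (x / ε) * g x = ∫ y, V y * g (ε * y) := by
  have h := Measure.integral_comp_div (fun y => V y * g (ε * y)) ε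
  simp only [mul_div_cancel₀ _ hε.ne', abs_of_pos hε, smul_eq_mul] at h
  simp_rw [mul_assoc, integral_const_mul, h, inv_mul_cancel_left₀ hε.ne']

lemma abs_integral_rescaled_sub_le {V g : ℝ → ℝ} (hV : Integrable V)
    (hVw : Integrable fun y => (1 + |y|) * |V y|) (hg : Continuous g) {K : ℝ}
    (hgK : ∀ z, |g z - g 0| ≤ K * √|z|) {ε : ℝ} (hε : 0 < ε) :
    |(∫ x, ε⁻¹ * V (x / ε) * g x) - (∫ x, V x) * g 0|
      ≤ K * (∫ y, (1 + |y|) * |V y|) * √ε := by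
  have hK : 0 ≤ K := by simpa using (abs_nonneg _).trans (hgK 1)
  have hpoint : ∀ y, ‖V y * (g (ε * y) - g 0)‖ ≤ K * √ε * ((1 + |y|) * |V y|) := fun y => by
    have hsqrt : √|y| ≤ 1 + |y| := Real.sqrt_le_iff.2 ⟨by positivity, by nlinarith [abs_nonneg y]⟩
    calc ‖V y * (g (ε * y) - g 0)‖ ≤ |V y| * (K * (√ε * √|y|)) := by
          rw [Real.norm_eq_abs, abs_mul, ← Real.sqrt_mul hε.le]
          refine mul_le_mul_of_nonneg_left ?_ (abs_nonneg _)
          simpa only [abs_mul, abs_of_pos hε] using hgK (ε * y)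
      _ ≤ |V y| * (K * (√ε * (1 + |y|))) := by gcongr
      _ = K * √ε * ((1 + |y|) * |V y|) := by ring
  have hint : Integrable fun y => V y * (g (ε * y) - g 0) :=
    (hVw.const_mul _).mono'
      (hV.aestronglyMeasurable.mul (by fun_prop : Continuous _).aestronglyMeasurable)
      (.of_forall hpoint)
  have hsplit : (∫ x, ε⁻¹ * V (x / ε) * g x) - (∫ x, V x) * g 0
      = ∫ y, V y * (g (ε * y) - g 0) := by
    have hint' : Integrable fun y => V y * g (ε * y) := by
      refine (hint.add (hV.mul_const (g 0))).congr (.of_forall fun y => ?_)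
      simp only [Pi.add_apply]
      ring
    rw [integral_inv_mul_comp_div_mul hε, ← integral_mul_const,
      ← integral_sub hint' (hV.mul_const _)]
    simp_rw [mul_sub]
  rw [hsplit, ← Real.norm_eq_abs]
  calc ‖∫ y, V y * (g (ε * y) - g 0)‖ ≤ ∫ y, K * √ε * ((1 + |y|) * |V y|) :=
        norm_integral_le_of_norm_le (hVw.const_mul _) (.of_forall hpoint)
    _ = K * (∫ y, (1 + |y|) * |V y|) * √ε := by rw [integral_const_mul]; ring

lemma tendsto_nhdsGT_of_abs_sub_le_mul_sqrt {f : ℝ → ℝ} {L c : ℝ}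
    (h : ∀ ε, 0 < ε → |f ε - L| ≤ c * √ε) : Tendsto f (𝓝[>] 0) (𝓝 L) := by
  have hc : Tendsto (fun ε => c * √ε) (𝓝[>] 0) (𝓝 0) := by
    have hcont : Continuous fun ε : ℝ => c * √ε := by fun_prop
    simpa using (hcont.tendsto 0).mono_left nhdsWithin_le_nhds
  refine tendsto_iff_dist_tendsto_zero.2 (squeeze_zero' (.of_forall fun _ => dist_nonneg) ?_ hc)
  filter_upwards [self_mem_nhdsWithin] with ε hε using h ε hε

namespace IsH1

variable {f g : ℝ → ℂ}

lemma norm_sub_le_sqrt (hfg : IsH1 f g) (x y : ℝ) :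
    ‖f y - f x‖ ≤ √(|y - x| * ∫ t, ‖g t‖ ^ 2) := by
  wlog hxy : x ≤ y generalizing x y
  · rw [norm_sub_rev, abs_sub_comm]; exact this y x (le_of_not_ge hxy)
  rw [hfg.2.2 x y, abs_of_nonneg (sub_nonneg.2 hxy)]
  exact (intervalIntegral.norm_integral_le_integral_norm hxy).trans
    (intervalIntegral_norm_le_sqrt_mul hfg.2.1 hxy)

lemma continuous (hfg : IsH1 f g) : Continuous f := by
  have hprimitive : f = fun y => f 0 + ∫ t in (0 : ℝ)..y, g t :=
    funext fun y => by rw [← hfg.2.2 0 y]; ring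
  rw [hprimitive]
  have hlocal : LocallyIntegrable g := hfg.2.1.locallyIntegrable one_le_two
  exact continuous_const.add <| intervalIntegral.continuous_primitive
    (fun a b => (hlocal.integrableOn_isCompact isCompact_uIcc).intervalIntegrable) 0

/-- On `[x, x + 1]` the function stays above `‖f x‖ - √(∫ ‖g‖²)`, so the square of that
quantity is at most `∫ ‖f‖²`. -/
lemma norm_le_s16 (hfg : IsH1 f g) (x : ℝ) :
    ‖f x‖ ≤ √(∫ t, ‖f t‖ ^ 2) + √(∫ t, ‖g t‖ ^ 2) := by
  set A := ∫ t, ‖g t‖ ^ 2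
  rcases le_or_gt ‖f x‖ √A with hsmall | hlarge
  · linarith [Real.sqrt_nonneg (∫ t, ‖f t‖ ^ 2)]
  have hfsq : Integrable fun t => ‖f t‖ ^ 2 := hfg.1.integrable_norm_pow two_ne_zero
  have hbelow : ∀ t ∈ Icc x (x + 1), (‖f x‖ - √A) ^ 2 ≤ ‖f t‖ ^ 2 := fun t ht => by
    have hdist : √(|x - t| * A) ≤ √A :=
      Real.sqrt_le_sqrt (mul_le_of_le_one_left (integral_nonneg fun _ => by positivity)
        (abs_le.2 ⟨by linarith [ht.2], by linarith [ht.1]⟩))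
    have htriangle := norm_sub_norm_le (f x) (f t)
    have hholder := hfg.norm_sub_le_sqrt t x
    exact pow_le_pow_left₀ (by linarith) (by linarith) 2
  have hsq : (‖f x‖ - √A) ^ 2 ≤ ∫ t, ‖f t‖ ^ 2 :=
    calc (‖f x‖ - √A) ^ 2 = ∫ _ in Icc x (x + 1), (‖f x‖ - √A) ^ 2 := by simp
      _ ≤ ∫ t in Icc x (x + 1), ‖f t‖ ^ 2 :=
        setIntegral_mono_on (integrableOn_const (by simp)) hfsq.integrableOn measurableSet_Icc
          hbelow
      _ ≤ ∫ t, ‖f t‖ ^ 2 := setIntegral_le_integral hfsq (.of_forall fun _ => by positivity)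
  linarith [(abs_le.1 (Real.abs_le_sqrt hsq)).2]

lemma abs_norm_rpow_sub_le (hfg : IsH1 f g) {p : ℝ} (hp : 1 ≤ p) (x y : ℝ) :
    |‖f y‖ ^ p - ‖f x‖ ^ p|
      ≤ p * (√(∫ t, ‖f t‖ ^ 2) + √(∫ t, ‖g t‖ ^ 2)) ^ (p - 1) * √(∫ t, ‖g t‖ ^ 2)
        * √|y - x| := by
  have hlip := abs_rpow_sub_rpow_le hp (norm_nonneg _) (hfg.norm_le_s16 y) (norm_nonneg _)
    (hfg.norm_le_s16 x)
  have hC : 0 ≤ p * (√(∫ t, ‖f t‖ ^ 2) + √(∫ t, ‖g t‖ ^ 2)) ^ (p - 1) := by positivity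
  calc _ ≤ _ := hlip
    _ ≤ _ * ‖f y - f x‖ := mul_le_mul_of_nonneg_left (abs_norm_sub_norm_le _ _) hC
    _ ≤ _ * √(|y - x| * ∫ t, ‖g t‖ ^ 2) := mul_le_mul_of_nonneg_left (hfg.norm_sub_le_sqrt x y) hC
    _ = _ := by rw [Real.sqrt_mul (abs_nonneg _)]; ring

end IsH1

theorem energy_convergence_general (V : ℝ → ℝ) (μ : ℝ) (hμ : 0 < μ)
    (hV : Integrable V) (hVw : Integrable (fun x => (1 + |x|) * |V x|))
    (ψ0 dψ0 : ℝ → ℂ) (hψ0 : IsH1 ψ0 dψ0) :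
    (∃ c : ℝ, 0 < c ∧ ∀ ε : ℝ, 0 < ε →
      |((∫ x, ‖dψ0 x‖ ^ 2) + (μ + 1)⁻¹ * ∫ x, ε⁻¹ * V (x / ε) * ‖ψ0 x‖ ^ (2 * μ + 2))
        - ((∫ x, ‖dψ0 x‖ ^ 2) + (∫ x, V x) * (μ + 1)⁻¹ * ‖ψ0 0‖ ^ (2 * μ + 2))|
        ≤ c * Real.sqrt ε) ∧
    Filter.Tendsto
      (fun ε : ℝ =>
        (∫ x, ‖dψ0 x‖ ^ 2) + (μ + 1)⁻¹ * ∫ x, ε⁻¹ * V (x / ε) * ‖ψ0 x‖ ^ (2 * μ + 2))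
      (nhdsWithin 0 (Set.Ioi 0))
      (nhds ((∫ x, ‖dψ0 x‖ ^ 2) + (∫ x, V x) * (μ + 1)⁻¹ * ‖ψ0 0‖ ^ (2 * μ + 2))) := by
  have hp : 1 ≤ 2 * μ + 2 := by linarith
  set K := (2 * μ + 2) * (√(∫ t, ‖ψ0 t‖ ^ 2) + √(∫ t, ‖dψ0 t‖ ^ 2)) ^ (2 * μ + 2 - 1)
    * √(∫ t, ‖dψ0 t‖ ^ 2)
  set W := ∫ y, (1 + |y|) * |V y|
  have hpotential := fun ε (hε : 0 < ε) => abs_integral_rescaled_sub_le hV hVw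
    (g := fun x => ‖ψ0 x‖ ^ (2 * μ + 2))
    (hψ0.continuous.norm.rpow_const fun _ => Or.inr (by linarith))
    (fun z => by simpa using hψ0.abs_norm_rpow_sub_le hp 0 z) hε
  have hKW : 0 ≤ K * W := by positivity
  have hbound : ∀ ε : ℝ, 0 < ε →
      |((∫ x, ‖dψ0 x‖ ^ 2) + (μ + 1)⁻¹ * ∫ x, ε⁻¹ * V (x / ε) * ‖ψ0 x‖ ^ (2 * μ + 2))
        - ((∫ x, ‖dψ0 x‖ ^ 2) + (∫ x, V x) * (μ + 1)⁻¹ * ‖ψ0 0‖ ^ (2 * μ + 2))|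
        ≤ ((μ + 1)⁻¹ * (K * W) + 1) * √ε := fun ε hε => by
    have hμ1 : 0 < (μ + 1)⁻¹ := by positivity
    calc _ = |(μ + 1)⁻¹ * ((∫ x, ε⁻¹ * V (x / ε) * ‖ψ0 x‖ ^ (2 * μ + 2))
          - (∫ x, V x) * ‖ψ0 0‖ ^ (2 * μ + 2))| := by congr 1; ring
      _ = (μ + 1)⁻¹ * |(∫ x, ε⁻¹ * V (x / ε) * ‖ψ0 x‖ ^ (2 * μ + 2))
          - (∫ x, V x) * ‖ψ0 0‖ ^ (2 * μ + 2)| := by rw [abs_mul, abs_of_pos hμ1]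
      _ ≤ (μ + 1)⁻¹ * (K * W * √ε) := by gcongr; exact hpotential ε hε
      _ ≤ ((μ + 1)⁻¹ * (K * W) + 1) * √ε := by nlinarith [Real.sqrt_nonneg ε]
  exact ⟨⟨_, by positivity, hbound⟩, tendsto_nhdsGT_of_abs_sub_le_mul_sqrt hbound⟩

/-- Convergence of regularized energies: E^ε(ψ₀) → E(ψ₀) as ε → 0⁺, with rate
|E^ε(ψ₀) − E(ψ₀)| ≤ c√ε, where α = ∫V. -/
theorem energy_convergence (V : ℝ → ℝ) (μ : ℝ) (hμ : 0 < μ)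
    (hV : Integrable V) (hVw : Integrable (fun x => (1 + |x|) * |V x|))
    (hVb : ∃ C : ℝ, ∀ x, |V x| ≤ C)
    (ψ0 dψ0 : ℝ → ℂ) (hψ0 : IsH1 ψ0 dψ0) :
    (∃ c : ℝ, 0 < c ∧ ∀ ε : ℝ, 0 < ε →
      |((∫ x, ‖dψ0 x‖ ^ 2) + (μ + 1)⁻¹ * ∫ x, ε⁻¹ * V (x / ε) * ‖ψ0 x‖ ^ (2 * μ + 2))
        - ((∫ x, ‖dψ0 x‖ ^ 2) + (∫ x, V x) * (μ + 1)⁻¹ * ‖ψ0 0‖ ^ (2 * μ + 2))|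
        ≤ c * Real.sqrt ε) ∧
    Filter.Tendsto
      (fun ε : ℝ =>
        (∫ x, ‖dψ0 x‖ ^ 2) + (μ + 1)⁻¹ * ∫ x, ε⁻¹ * V (x / ε) * ‖ψ0 x‖ ^ (2 * μ + 2))
      (nhdsWithin 0 (Set.Ioi 0))
      (nhds ((∫ x, ‖dψ0 x‖ ^ 2) + (∫ x, V x) * (μ + 1)⁻¹ * ‖ψ0 0‖ ^ (2 * μ + 2))) :=
  energy_convergence_general V μ hμ hV hVw ψ0 dψ0 hψ0
end
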